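/- arXiv:1803.11275 — 2 statements merged into one kernel-verified Lean document; each statement's English description precedes it below -/
import Mathlib

section
/- Let G be a simple graph on n vertices with walk matrix W, let Ḡ be its complement with adjacency matrix Ā, and let G ∨ w be the graph on n+1 vertices obtained from G by adding a new vertex w adjacent to every vertex of G. If the vertices of G ∨ w are ordered with w first, followed by the vertices of G in their original order, then det(W(G ∨ w)) = (−1)^n · det(Ā) · det(W). -/
open Matrix

open scoped Classical in
/-- The 0/1 adjacency matrix of a simple graph, over the integers. -/
noncomputable def adjMat {V : Type*} [Fintype V] (G : SimpleGraph V) : Matrix V V ℤ :=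
  Matrix.of fun u v => if G.Adj u v then (1 : ℤ) else 0

/-- The walk matrix of a simple graph on `Fin n`: its `j`-th column is ``A^j e``
where `e` is the all-ones vector. -/
noncomputable def walkMat {n : ℕ} (G : SimpleGraph (Fin n)) : Matrix (Fin n) (Fin n) ℤ :=
  Matrix.of fun i j => ((adjMat G ^ (j : ℕ)) *ᵥ fun _ => (1 : ℤ)) i

/-- `G ∪ w`: adjoin a new vertex (labelled `0`) adjacent to no vertex of `G`;
the original vertex `i` of `G` becomes `i.succ`. -/
def unionVertex {n : ℕ} (G : SimpleGraph (Fin n)) : SimpleGraph (Fin (n + 1)) where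
  Adj u v := ∃ i j : Fin n, u = i.succ ∧ v = j.succ ∧ G.Adj i j
  symm := by
    constructor
    rintro u v ⟨i, j, hu, hv, h⟩
    exact ⟨j, i, hv, hu, h.symm⟩
  loopless := by
    constructor
    rintro u ⟨i, j, rfl, hv, h⟩
    obtain rfl : i = j := Fin.succ_inj.mp hv
    exact G.loopless.irrefl i h

/-- `G ∨ w`: adjoin a new vertex (labelled `0`) adjacent to every vertex of `G`;
the original vertex `i` of `G` becomes `i.succ`. -/
def joinVertex {n : ℕ} (G : SimpleGraph (Fin n)) : SimpleGraph (Fin (n + 1)) where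
  Adj u v := (u = 0 ∧ v ≠ 0) ∨ (v = 0 ∧ u ≠ 0) ∨
    ∃ i j : Fin n, u = i.succ ∧ v = j.succ ∧ G.Adj i j
  symm := by
    constructor
    rintro u v (⟨h1, h2⟩ | ⟨h1, h2⟩ | ⟨i, j, hu, hv, h⟩)
    · exact Or.inr (Or.inl ⟨h1, h2⟩)
    · exact Or.inl ⟨h1, h2⟩
    · exact Or.inr (Or.inr ⟨j, i, hv, hu, h.symm⟩)
  loopless := by
    constructor
    rintro u (⟨h1, h2⟩ | ⟨h1, h2⟩ | ⟨i, j, rfl, hv, h⟩)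
    · exact h2 h1
    · exact h2 h1
    · obtain rfl : i = j := Fin.succ_inj.mp hv
      exact G.loopless.irrefl i h

/-- The sequence `G₀, G₁, G₂, …` where `Gᵢ = G_{i-1} ∪ wᵢ` for odd `i` and
`Gᵢ = G_{i-1} ∨ wᵢ` for even `i ≥ 2`. -/
def seqGraph {n0 : ℕ} (G0 : SimpleGraph (Fin n0)) : (i : ℕ) → SimpleGraph (Fin (n0 + i))
  | 0 => G0
  | (i + 1) => if (i + 1) % 2 = 1 then unionVertex (seqGraph G0 i) else joinVertex (seqGraph G0 i)

/-- A graph is determined by its generalized spectrum. -/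
def IsDGS {n : ℕ} (G : SimpleGraph (Fin n)) : Prop :=
  ∀ H : SimpleGraph (Fin n),
    (adjMat H).charpoly = (adjMat G).charpoly →
    (adjMat Hᶜ).charpoly = (adjMat Gᶜ).charpoly →
    Nonempty (H ≃g G)

/-!
With `B` the adjacency matrix of `G ∨ w`, write `B ^ j e = (a_j, v_j)` (apex entry first), so
that `a_{j+1} = Σ v_j` and `v_{j+1} = a_j e + A v_j`. Hence `v_j = p_j(A) e` for a monic `p_j` of
degree `j`, and since `Ā = J - I - A`, the column `B^{j+1} e + B^j e - (a_{j+1} + a_j) e` equals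
`(0, -Ā v_j)`. Replacing the columns of a Krylov matrix `[x, Ax, …]` by `[q_0(A)x, q_1(A)x, …]`
with `q_j` monic of degree `j` is multiplication by a unitriangular matrix, so both walk
matrices keep their determinants: `det W(G ∨ w) = det (-Ā V)` with `V = [v_0, …, v_{n-1}]`, and
`det V = det W(G)`.
-/

open Polynomial

theorem det_eq_det_submatrix_succ_of_row_zero {R : Type*} [CommRing R] {n : ℕ}
    (M : Matrix (Fin (n + 1)) (Fin (n + 1)) R) (h00 : M 0 0 = 1)
    (h0 : ∀ j : Fin n, M 0 j.succ = 0) :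
    M.det = (M.submatrix Fin.succ Fin.succ).det := by
  simp [det_succ_row_zero M, Fin.sum_univ_succ, h00, h0]

section Krylov

variable {R : Type*} [CommRing R] {n : ℕ}

def krylovMat (A : Matrix (Fin n) (Fin n) R) (x : Fin n → R) : Matrix (Fin n) (Fin n) R :=
  of fun i j => (A ^ (j : ℕ) *ᵥ x) i

theorem aeval_mulVec_eq_krylovMat_mulVec (A : Matrix (Fin n) (Fin n) R) (x : Fin n → R)
    {p : R[X]} (hp : p.natDegree < n) :
    aeval A p *ᵥ x = krylovMat A x *ᵥ fun k : Fin n => p.coeff k := by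
  ext i
  rw [aeval_eq_sum_range' hp, sum_mulVec, ← Fin.sum_univ_eq_sum_range, Finset.sum_apply]
  simp only [smul_mulVec, Pi.smul_apply, smul_eq_mul, mul_comm]
  rfl

theorem det_of_aeval_mulVec_eq_det_krylovMat (A : Matrix (Fin n) (Fin n) R) (x : Fin n → R)
    (p : Fin n → R[X]) (hmonic : ∀ j, (p j).Monic) (hdeg : ∀ j, (p j).natDegree = j) :
    (of fun i j => (aeval A (p j) *ᵥ x) i).det = (krylovMat A x).det := by
  set T : Matrix (Fin n) (Fin n) R := of fun k j => (p j).coeff k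
  have hfactor : (of fun i j => (aeval A (p j) *ᵥ x) i) = krylovMat A x * T := by
    ext i j
    rw [of_apply, aeval_mulVec_eq_krylovMat_mulVec A x ((hdeg j).trans_lt j.isLt)]
    rfl
  have htriangular : T.IsUpperTriangular := fun k j hjk =>
    coeff_eq_zero_of_natDegree_lt ((hdeg j).trans_lt hjk)
  rw [hfactor, det_mul, det_of_isUpperTriangular htriangular,
    Finset.prod_eq_one fun j _ => by simpa [T, hdeg j] using (hmonic j).coeff_natDegree, mul_one]

end Krylov

theorem walkMat_eq_krylovMat {n : ℕ} (G : SimpleGraph (Fin n)) :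
    walkMat G = krylovMat (adjMat G) 1 :=
  rfl

theorem adjMat_compl {V : Type*} [Fintype V] [DecidableEq V] (H : SimpleGraph V) :
    adjMat Hᶜ = of (fun _ _ => 1) - 1 - adjMat H := by
  ext u v
  by_cases huv : u = v
  · subst huv; simp [adjMat]
  · by_cases h : H.Adj u v <;> simp [adjMat, huv, h, one_apply_ne huv]

theorem adjMat_compl_mulVec {V : Type*} [Fintype V] [DecidableEq V] (H : SimpleGraph V)
    (x : V → ℤ) : adjMat Hᶜ *ᵥ x = (fun _ => ∑ v, x v) - x - adjMat H *ᵥ x := by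
  rw [adjMat_compl, sub_mulVec, sub_mulVec, one_mulVec]
  ext u
  simp [mulVec, dotProduct]

section JoinVertex

variable {n : ℕ} (G : SimpleGraph (Fin n))

@[simp] theorem joinVertex_adj_zero_succ (i : Fin n) : (joinVertex G).Adj 0 i.succ :=
  Or.inl ⟨rfl, i.succ_ne_zero⟩

@[simp] theorem joinVertex_adj_succ_zero (i : Fin n) : (joinVertex G).Adj i.succ 0 :=
  (joinVertex_adj_zero_succ G i).symm

@[simp] theorem joinVertex_adj_succ_succ (i j : Fin n) :
    (joinVertex G).Adj i.succ j.succ ↔ G.Adj i j := by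
  refine ⟨?_, fun h => Or.inr (Or.inr ⟨i, j, rfl, rfl, h⟩)⟩
  rintro (⟨h, -⟩ | ⟨h, -⟩ | ⟨i', j', hi, hj, h⟩)
  · exact absurd h i.succ_ne_zero
  · exact absurd h j.succ_ne_zero
  · rwa [Fin.succ_inj.mp hi, Fin.succ_inj.mp hj]

theorem adjMat_joinVertex_mulVec (x : Fin (n + 1) → ℤ) :
    adjMat (joinVertex G) *ᵥ x =
      Fin.cons (∑ i, Fin.tail x i) (fun i => x 0 + (adjMat G *ᵥ Fin.tail x) i) := by
  classical
  ext i
  induction i using Fin.cases <;>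
    simp [mulVec, dotProduct, Fin.sum_univ_succ, adjMat, Fin.tail]

noncomputable def joinWalkVec (j : ℕ) : Fin (n + 1) → ℤ :=
  adjMat (joinVertex G) ^ j *ᵥ 1

theorem joinWalkVec_succ (j : ℕ) :
    joinWalkVec G (j + 1) = Fin.cons (∑ i, Fin.tail (joinWalkVec G j) i)
      (fun i => joinWalkVec G j 0 + (adjMat G *ᵥ Fin.tail (joinWalkVec G j)) i) := by
  rw [joinWalkVec, pow_succ', ← mulVec_mulVec, adjMat_joinVertex_mulVec]
  rfl

noncomputable def joinTailPoly : ℕ → ℤ[X]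
  | 0 => 1
  | j + 1 => X * joinTailPoly j + C (joinWalkVec G j 0)

theorem joinTailPoly_monic (j : ℕ) : (joinTailPoly G j).Monic := by
  induction j with
  | zero => exact monic_one
  | succ j ih => rw [joinTailPoly]; monicity!

theorem natDegree_joinTailPoly (j : ℕ) : (joinTailPoly G j).natDegree = j := by
  induction j with
  | zero => exact natDegree_one
  | succ j ih =>
    rw [joinTailPoly, natDegree_add_C, natDegree_X_mul (joinTailPoly_monic G j).ne_zero, ih]

theorem tail_joinWalkVec (j : ℕ) :
    Fin.tail (joinWalkVec G j) = aeval (adjMat G) (joinTailPoly G j) *ᵥ 1 := by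
  induction j with
  | zero => simp only [joinWalkVec, pow_zero, one_mulVec, joinTailPoly, map_one]; rfl
  | succ j ih =>
    rw [joinWalkVec_succ, Fin.tail_cons, joinTailPoly, map_add, map_mul, aeval_X, aeval_C,
      add_mulVec, ← mulVec_mulVec, ← ih]
    ext i
    simp [add_comm]

noncomputable def joinReducedPoly : ℕ → ℤ[X]
  | 0 => 1
  | j + 1 => X ^ (j + 1) + X ^ j - C (joinWalkVec G (j + 1) 0 + joinWalkVec G j 0)

theorem joinReducedPoly_monic (j : ℕ) : (joinReducedPoly G j).Monic := by
  cases j with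
  | zero => exact monic_one
  | succ j => rw [joinReducedPoly]; monicity!

theorem natDegree_joinReducedPoly (j : ℕ) : (joinReducedPoly G j).natDegree = j := by
  cases j with
  | zero => exact natDegree_one
  | succ j => rw [joinReducedPoly]; compute_degree!

theorem aeval_joinReducedPoly_succ_mulVec (j : ℕ) :
    aeval (adjMat (joinVertex G)) (joinReducedPoly G (j + 1)) *ᵥ 1 =
      Fin.cons 0 (-(adjMat Gᶜ *ᵥ Fin.tail (joinWalkVec G j))) := by
  classical
  have hpow (k : ℕ) : adjMat (joinVertex G) ^ k *ᵥ 1 = joinWalkVec G k := rfl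
  simp only [joinReducedPoly, map_sub, map_add, map_pow, aeval_X, aeval_C, sub_mulVec,
    add_mulVec, hpow, Algebra.algebraMap_eq_smul_one, smul_mulVec, one_mulVec]
  ext i
  simp only [Pi.sub_apply, Pi.add_apply, Pi.smul_apply, smul_eq_mul, Pi.one_apply, mul_one,
    joinWalkVec_succ]
  induction i using Fin.cases with
  | zero => rw [Fin.cons_zero, Fin.cons_zero, sub_self]
  | succ i =>
    rw [Fin.cons_succ, Fin.cons_succ, Fin.cons_zero, Pi.neg_apply, adjMat_compl_mulVec]
    simp only [Pi.sub_apply, Fin.tail]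
    ring

end JoinVertex

/-- with the new vertex `w` listed first,
det(W(G ∨ w)) = (−1)^n · det(Ā) · det(W). -/
theorem det_walkMat_joinVertex {n : ℕ} (G : SimpleGraph (Fin n)) :
    (walkMat (joinVertex G)).det = (-1 : ℤ) ^ n * (adjMat Gᶜ).det * (walkMat G).det := by
  set M : Matrix (Fin (n + 1)) (Fin (n + 1)) ℤ :=
    of fun i c => (aeval (adjMat (joinVertex G)) (joinReducedPoly G c) *ᵥ 1) i
  set V : Matrix (Fin n) (Fin n) ℤ := of fun i j => Fin.tail (joinWalkVec G j) i
  have hM : (walkMat (joinVertex G)).det = M.det := by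
    rw [walkMat_eq_krylovMat]
    exact (det_of_aeval_mulVec_eq_det_krylovMat _ _ _ (fun c => joinReducedPoly_monic G c)
      (fun c => natDegree_joinReducedPoly G c)).symm
  have hV : V.det = (walkMat G).det := by
    simp only [V, tail_joinWalkVec, walkMat_eq_krylovMat]
    exact det_of_aeval_mulVec_eq_det_krylovMat _ _ _ (fun j => joinTailPoly_monic G j)
      (fun j => natDegree_joinTailPoly G j)
  have hrow : M.det = (M.submatrix Fin.succ Fin.succ).det :=
    det_eq_det_submatrix_succ_of_row_zero M (by simp [M, joinReducedPoly])
      (fun j => by simp [M, aeval_joinReducedPoly_succ_mulVec])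
  have hsub : M.submatrix Fin.succ Fin.succ = -(adjMat Gᶜ * V) := by
    ext i j
    simp only [M, submatrix_apply, of_apply, Fin.val_succ, aeval_joinReducedPoly_succ_mulVec,
      Fin.cons_succ, Pi.neg_apply, neg_apply]
    rfl
  rw [hM, hrow, hsub, det_neg, det_mul, Fintype.card_fin, hV, mul_assoc]
end

section
/- Let G be a simple graph on n vertices with walk matrix W, and let Ḡ be its complement with walk matrix W̄. If 2^{⌊n/2⌋} divides |det(W)| and the quotient |det(W)| · 2^{−⌊n/2⌋} is odd and square-free, then 2^{⌊n/2⌋} divides |det(W̄)|, and the quotient |det(W̄)| · 2^{−⌊n/2⌋} equals |det(W)| · 2^{−⌊n/2⌋}; in particular it is also odd and square-free. -/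
open Matrix

/-!
Write `A` for the adjacency matrix of `G` and `e` for the all-ones vector. The adjacency matrix
of the complement is `Ā = -A - I + e eᵀ`, so `Ā x + A x` lies in the span of `x` and `e` for
every `x`. By induction, `Āʲ e ≡ (-1)ʲ Aʲ e` modulo the span of `e, A e, …, Aʲ⁻¹ e`, i.e.
`W(Ḡ) = W(G) U` with `U` upper triangular with diagonal entries `±1`. Hence
`|det W(Ḡ)| = |det W(G)|`, and the three conditions transfer unchanged.
-/

open Submodule

namespace Matrix

variable {R ι : Type*} [CommRing R] [Fintype ι] [DecidableEq ι]

theorem det_eq_det_mul_prod_of_col_sub_smul_mem_span [LinearOrder ι] {M M' : Matrix ι ι R}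
    (c : ι → R) (h : ∀ j, M'.col j - c j • M.col j ∈ span R (M.col '' Set.Iio j)) :
    M'.det = M.det * ∏ j, c j := by
  choose l hl hlM using fun j => (Finsupp.mem_span_image_iff_linearCombination R).1 (h j)
  have hl_eq_zero : ∀ j k, ¬ k < j → l j k = 0 := fun j k hk =>
    Finsupp.notMem_support_iff.1 fun hmem => hk (hl j hmem)
  set U : Matrix ι ι R := of (fun k j => l j k) + diagonal c
  have hU : M' = M * U := by
    ext i j
    have hcol := congrFun (hlM j) i
    rw [Finsupp.linearCombination_apply,
      Finsupp.sum_fintype _ _ fun _ => zero_smul R (M.col _)] at hcol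
    simp only [Finset.sum_apply, Pi.smul_apply, Pi.sub_apply, col_apply, smul_eq_mul] at hcol
    rw [Matrix.mul_add, Matrix.add_apply, mul_diagonal, mul_apply]
    simp only [of_apply, mul_comm (M i _) (l j _)]
    linear_combination -hcol
  have hU_tri : U.IsUpperTriangular := fun i j hji => by
    simp [U, hl_eq_zero j i (not_lt.2 hji.le), diagonal_apply_ne c (ne_of_gt hji : i ≠ j)]
  rw [hU, det_mul, det_of_isUpperTriangular hU_tri]
  congr 1
  exact Finset.prod_congr rfl fun j _ => by simp [U, hl_eq_zero j j (lt_irrefl j)]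

def krylovSpan (A : Matrix ι ι R) (v : ι → R) (j : ℕ) : Submodule R (ι → R) :=
  span R ((fun k => A ^ k *ᵥ v) '' Set.Iio j)

variable {A : Matrix ι ι R} {v : ι → R}

theorem krylovSpan_mono : Monotone (krylovSpan A v) :=
  fun _ _ hij => span_mono (Set.image_mono (Set.Iio_subset_Iio hij))

theorem pow_mulVec_mem_krylovSpan {j k : ℕ} (hk : k < j) : A ^ k *ᵥ v ∈ krylovSpan A v j :=
  subset_span ⟨k, hk, rfl⟩

theorem mulVec_mem_krylovSpan_succ {j : ℕ} {y : ι → R} (hy : y ∈ krylovSpan A v j) :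
    A *ᵥ y ∈ krylovSpan A v (j + 1) := by
  suffices krylovSpan A v j ≤ (krylovSpan A v (j + 1)).comap A.mulVecLin from this hy
  refine span_le.2 ?_
  rintro _ ⟨k, hk, rfl⟩
  simpa [mulVec_mulVec, ← pow_succ'] using
    pow_mulVec_mem_krylovSpan (A := A) (v := v) (Nat.succ_lt_succ hk)

theorem pow_mulVec_sub_smul_mem_krylovSpan {B : Matrix ι ι R} {u : ι → R} {c d : R}
    (hB : B = c • A + d • 1 + vecMulVec v u) (j : ℕ) :
    B ^ j *ᵥ v - c ^ j • (A ^ j *ᵥ v) ∈ krylovSpan A v j := by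
  have hBmulVec : ∀ y, B *ᵥ y = c • (A *ᵥ y) + d • y + (u ⬝ᵥ y) • v := fun y => by
    simp [hB, add_mulVec, smul_mulVec, vecMulVec_mulVec]
  induction j with
  | zero => simp
  | succ j ih =>
    have hv : v ∈ krylovSpan A v (j + 1) := by
      simpa using pow_mulVec_mem_krylovSpan (A := A) (v := v) (Nat.succ_pos j)
    have hB_mem : ∀ y ∈ krylovSpan A v j, B *ᵥ y ∈ krylovSpan A v (j + 1) := by
      intro y hy
      rw [hBmulVec]
      exact add_mem (add_mem (smul_mem _ _ (mulVec_mem_krylovSpan_succ hy))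
        (smul_mem _ _ (krylovSpan_mono j.le_succ hy))) (smul_mem _ _ hv)
    have hsplit : B ^ (j + 1) *ᵥ v - c ^ (j + 1) • (A ^ (j + 1) *ᵥ v) =
        B *ᵥ (B ^ j *ᵥ v - c ^ j • (A ^ j *ᵥ v)) +
          c ^ j • (d • (A ^ j *ᵥ v) + (u ⬝ᵥ (A ^ j *ᵥ v)) • v) := by
      rw [pow_succ' B, pow_succ' A, ← mulVec_mulVec, ← mulVec_mulVec, mulVec_sub, mulVec_smul,
        hBmulVec (A ^ j *ᵥ v)]
      module
    rw [hsplit]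
    exact add_mem (hB_mem _ ih) (smul_mem _ _ (add_mem
      (smul_mem _ _ (pow_mulVec_mem_krylovSpan j.lt_succ_self)) (smul_mem _ _ hv)))

end Matrix

theorem adjMat_compl_s14 {n : ℕ} (G : SimpleGraph (Fin n)) :
    adjMat Gᶜ = (-1 : ℤ) • adjMat G + (-1 : ℤ) • 1 + vecMulVec (fun _ => 1) (fun _ => 1) := by
  ext u v
  by_cases huv : u = v
  · subst huv; simp [adjMat, vecMulVec_apply]
  · by_cases h : G.Adj u v <;> simp [adjMat, huv, h, one_apply_ne huv, vecMulVec_apply]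

theorem det_walkMat_compl {n : ℕ} (G : SimpleGraph (Fin n)) :
    (walkMat Gᶜ).det = (walkMat G).det * ∏ j : Fin n, (-1) ^ (j : ℕ) := by
  refine det_eq_det_mul_prod_of_col_sub_smul_mem_span _ fun j => ?_
  have hcols : (walkMat G).col '' Set.Iio j =
      (fun k : ℕ => adjMat G ^ k *ᵥ fun _ => 1) '' Set.Iio (j : ℕ) := by
    rw [← Fin.image_val_Iio, Set.image_image]
    rfl
  rw [hcols]
  exact pow_mulVec_sub_smul_mem_krylovSpan (adjMat_compl_s14 G) j

theorem natAbs_det_walkMat_compl {n : ℕ} (G : SimpleGraph (Fin n)) :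
    (walkMat Gᶜ).det.natAbs = (walkMat G).det.natAbs := by
  rw [det_walkMat_compl, Finset.prod_pow_eq_pow_sum, Int.natAbs_mul, Int.natAbs_pow]
  simp

/-- the extremal divisibility condition 𝒞 transfers from a graph to its
complement, with the same odd square-free quotient. -/
theorem condition_C_compl {n : ℕ} (G : SimpleGraph (Fin n))
    (hdvd : 2 ^ (n / 2) ∣ ((walkMat G).det).natAbs)
    (hodd : Odd (((walkMat G).det).natAbs / 2 ^ (n / 2)))
    (hsf : Squarefree (((walkMat G).det).natAbs / 2 ^ (n / 2))) :
    2 ^ (n / 2) ∣ ((walkMat Gᶜ).det).natAbs ∧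
      ((walkMat Gᶜ).det).natAbs / 2 ^ (n / 2) = ((walkMat G).det).natAbs / 2 ^ (n / 2) ∧
      Odd (((walkMat Gᶜ).det).natAbs / 2 ^ (n / 2)) ∧
      Squarefree (((walkMat Gᶜ).det).natAbs / 2 ^ (n / 2)) := by
  rw [natAbs_det_walkMat_compl G]
  exact ⟨hdvd, rfl, hodd, hsf⟩
end
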